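/- Let k be a field, A a commutative Noetherian k-algebra, and I, L ideals of A with J = I + L. Suppose that I/I² is a free A/I-module of rank c and that A/J is a finite-dimensional k-vector space. Then the restriction map Hom_A((I+L)/(I²+L), A/J) → Hom_A(I/(I²+I·L), A/J) is injective, Q(L,I) is a finite-dimensional k-vector space, and dim_k Q(L,I) = c · dim_k(A/J) − dim_k Hom_A((I+L)/(I²+L), A/J). -/

import Mathlib

open Submodule

variable (A : Type*) [CommRing A]

/-- The natural map `I/(I² + I·L) → (I+L)/(I² + L)` induced by the inclusion `I ⊆ I + L`. -/
noncomputable def qIota (L I : Ideal A) :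
    (↥I ⧸ Submodule.comap I.subtype (I ^ 2 + I * L)) →ₗ[A]
      (↥(I + L) ⧸ Submodule.comap (I + L).subtype (I ^ 2 + L)) :=
  Submodule.liftQ _
    ((Submodule.comap (I + L).subtype (I ^ 2 + L)).mkQ.comp
      (Submodule.inclusion (le_sup_left : I ≤ I + L)))
    (by
      intro x hx
      have hle : I ^ 2 + I * L ≤ I ^ 2 + L := by
        rw [Submodule.add_eq_sup, Submodule.add_eq_sup]
        exact sup_le_sup_left Ideal.mul_le_right _
      simp only [LinearMap.mem_ker, LinearMap.comp_apply, Submodule.mkQ_apply,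
        Submodule.Quotient.mk_eq_zero, Submodule.mem_comap, Submodule.coe_subtype,
        Submodule.coe_inclusion]
      exact hle hx)

/-- The restriction map `Hom_A((I+L)/(I²+L), A/(I+L)) → Hom_A(I/(I²+I·L), A/(I+L))`. -/
noncomputable def qRes (L I : Ideal A) :
    ((↥(I + L) ⧸ Submodule.comap (I + L).subtype (I ^ 2 + L)) →ₗ[A] A ⧸ (I + L)) →ₗ[A]
      ((↥I ⧸ Submodule.comap I.subtype (I ^ 2 + I * L)) →ₗ[A] A ⧸ (I + L)) :=
  LinearMap.lcomp A (A ⧸ (I + L)) (qIota A L I)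

/-- The module `Q(L,I)`: the cokernel of the restriction map
`Hom_A((I+L)/(I²+L), A/(I+L)) → Hom_A(I/(I²+I·L), A/(I+L))`. -/
noncomputable abbrev Qmod (L I : Ideal A) :=
  ((↥I ⧸ Submodule.comap I.subtype (I ^ 2 + I * L)) →ₗ[A] A ⧸ (I + L)) ⧸
    LinearMap.range (qRes A L I)

section Psi
variable {A : Type*} [CommRing A] (I L : Ideal A) {c : ℕ}

/-- The map `I → (A/(I+L))^c` determined by a basis of `I/I²`. -/
noncomputable def qPsi (b : Module.Basis (Fin c) (A ⧸ I) I.Cotangent) :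
    ↥I →ₗ[A] (Fin c → A ⧸ (I + L)) :=
  (LinearMap.pi fun i =>
      (Submodule.mapQ I (I + L) LinearMap.id le_sup_left) ∘ₗ LinearMap.proj i) ∘ₗ
    (b.equivFun.restrictScalars A).toLinearMap ∘ₗ I.toCotangent

theorem qPsi_apply (b : Module.Basis (Fin c) (A ⧸ I) I.Cotangent) (x : ↥I) (i : Fin c) :
    qPsi I L b x i =
      Submodule.mapQ I (I + L) LinearMap.id le_sup_left (b.repr (I.toCotangent x) i) := by
  simp [qPsi, Module.Basis.equivFun_apply]

theorem qPsi_surjective (b : Module.Basis (Fin c) (A ⧸ I) I.Cotangent) :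
    Function.Surjective (qPsi I L b) := by
  have hq : Function.Surjective (Submodule.mapQ I (I + L) LinearMap.id le_sup_left) := by
    intro y
    obtain ⟨a, rfl⟩ := Submodule.Quotient.mk_surjective _ y
    exact ⟨Submodule.Quotient.mk a, by rw [Submodule.mapQ_apply]; rfl⟩
  intro v
  choose u hu using fun i => hq (v i)
  obtain ⟨m, hm⟩ := I.toCotangent_surjective (b.equivFun.symm u)
  refine ⟨m, funext fun i => ?_⟩
  rw [qPsi_apply, hm]
  have h2 : ⇑(b.repr (b.equivFun.symm u)) = u := by
    rw [← Module.Basis.equivFun_apply, LinearEquiv.apply_symm_apply]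
  rw [show b.repr (b.equivFun.symm u) i = u i from congrFun h2 i, hu]

theorem smul_quot_eq_zero {a : A} (ha : a ∈ I + L) (y : A ⧸ (I + L)) : a • y = 0 := by
  obtain ⟨b, rfl⟩ := Submodule.Quotient.mk_surjective _ y
  rw [← Submodule.Quotient.mk_smul, smul_eq_mul]
  exact (Submodule.Quotient.mk_eq_zero _).2 (Ideal.mul_mem_right b _ ha)

theorem qPsi_ker (b : Module.Basis (Fin c) (A ⧸ I) I.Cotangent) :
    LinearMap.ker (qPsi I L b) = Submodule.comap I.subtype (I ^ 2 + I * L) := by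
  apply le_antisymm
  · -- hard direction
    intro x hx
    rw [LinearMap.mem_ker] at hx
    set y := I.toCotangent x with hy
    have h1 : ∀ i, ∃ l ∈ L, Ideal.Quotient.mk I l = b.repr y i := by
      intro i
      have hxi : Submodule.mapQ I (I + L) LinearMap.id le_sup_left (b.repr y i) = 0 := by
        rw [← qPsi_apply I L b x i, hx]; rfl
      obtain ⟨a, ha⟩ := Ideal.Quotient.mk_surjective (b.repr y i)
      rw [← ha] at hxi ⊢
      have haJ : a ∈ I + L := by
        have : Submodule.mapQ I (I + L) LinearMap.id le_sup_left (Ideal.Quotient.mk I a)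
            = Submodule.Quotient.mk a := by
          simp [Submodule.mapQ_apply]
        rw [this] at hxi
        exact (Submodule.Quotient.mk_eq_zero _).1 hxi
      obtain ⟨p, hp, l, hl, hpl⟩ := Submodule.mem_sup.mp haJ
      refine ⟨l, hl, ?_⟩
      rw [Ideal.Quotient.mk_eq_mk_iff_sub_mem]
      have : l - a = -p := by rw [← hpl]; ring
      rw [this]
      exact neg_mem hp
    choose l hlL hlmk using h1
    choose w hw using fun i => I.toCotangent_surjective (b i)
    have hsum : I.toCotangent (∑ i, l i • w i) = y := by
      rw [map_sum]
      have : ∀ i, I.toCotangent (l i • w i) = b.repr y i • b i := by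
        intro i
        rw [map_smul, hw, ← hlmk]
        rw [← Ideal.Quotient.algebraMap_eq, algebraMap_smul]
      simp_rw [this]
      exact b.sum_repr y
    have hker : I.toCotangent (x - ∑ i, l i • w i) = 0 := by
      rw [map_sub, hsum, hy, sub_self]
    have hI2 : ((x - ∑ i, l i • w i : ↥I) : A) ∈ I ^ 2 :=
      (I.toCotangent_eq_zero _).1 hker
    have hIL : ((∑ i, l i • w i : ↥I) : A) ∈ I * L := by
      rw [Submodule.coe_sum]
      refine Submodule.sum_mem _ fun i _ => ?_
      have : ((l i • w i : ↥I) : A) = (w i : A) * l i := by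
        rw [Submodule.coe_smul, smul_eq_mul, mul_comm]
      rw [this]
      exact Ideal.mul_mem_mul (w i).2 (hlL i)
    rw [Submodule.mem_comap]
    have hxval : (I.subtype x : A) = ((x - ∑ i, l i • w i : ↥I) : A)
        + ((∑ i, l i • w i : ↥I) : A) := by
      simp
    rw [hxval]
    exact Submodule.add_mem _ (Submodule.mem_sup_left hI2) (Submodule.mem_sup_right hIL)
  · -- easy direction
    have hsub : I ^ 2 + I * L ≤ Submodule.map I.subtype (LinearMap.ker (qPsi I L b)) := by
      have key : ∀ (r : A) (hr : r ∈ I) (s : A), s ∈ I + L →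
          r * s ∈ Submodule.map I.subtype (LinearMap.ker (qPsi I L b)) := by
        intro r hr s hs
        refine Submodule.mem_map.mpr ⟨s • ⟨r, hr⟩, ?_, ?_⟩
        · rw [LinearMap.mem_ker, map_smul]
          funext i
          rw [Pi.smul_apply]
          exact smul_quot_eq_zero I L hs _
        · rw [Submodule.coe_subtype, Submodule.coe_smul, smul_eq_mul, mul_comm]
      apply sup_le
      · rw [pow_two, Ideal.mul_le]
        intro r hr s hs
        exact key r hr s (Submodule.mem_sup_left hs)
      · rw [Ideal.mul_le]
        intro r hr s hs
        exact key r hr s (Submodule.mem_sup_right hs)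
    intro x hx
    rw [Submodule.mem_comap] at hx
    obtain ⟨y, hy, hyx⟩ := hsub hx
    have : y = x := Subtype.ext hyx
    rwa [← this]

end Psi

section Equivs
variable {A : Type*} [CommRing A] (I L : Ideal A) {c : ℕ}

/-- `I/(I²+I·L) ≃ (A/(I+L))^c`. -/
noncomputable def qModEquiv (b : Module.Basis (Fin c) (A ⧸ I) I.Cotangent) :
    (↥I ⧸ Submodule.comap I.subtype (I ^ 2 + I * L)) ≃ₗ[A] (Fin c → A ⧸ (I + L)) :=
  (Submodule.quotEquivOfEq _ _ (qPsi_ker I L b).symm).trans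
    ((qPsi I L b).quotKerEquivOfSurjective (qPsi_surjective I L b))

/-- `End_A(A/J) ≃ A/J`. -/
noncomputable def endEquiv (J : Ideal A) : ((A ⧸ J) →ₗ[A] (A ⧸ J)) ≃ₗ[A] A ⧸ J where
  toFun f := f 1
  map_add' f g := rfl
  map_smul' a f := rfl
  invFun y :=
    { toFun := fun z => y * z
      map_add' := mul_add y
      map_smul' := fun a z => mul_smul_comm a y z }
  left_inv f := by
    apply LinearMap.ext
    intro z
    obtain ⟨a, rfl⟩ := Ideal.Quotient.mk_surjective z
    show f 1 * Ideal.Quotient.mk J a = f (Ideal.Quotient.mk J a)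
    have h1 : (Ideal.Quotient.mk J a : A ⧸ J) = a • (1 : A ⧸ J) := by
      rw [Algebra.smul_def, mul_one, Ideal.Quotient.algebraMap_eq]
    calc f 1 * Ideal.Quotient.mk J a = Ideal.Quotient.mk J a * f 1 := mul_comm _ _
      _ = a • f 1 := by rw [← Ideal.Quotient.algebraMap_eq, ← Algebra.smul_def]
      _ = f (a • 1) := (f.map_smul a 1).symm
      _ = f (Ideal.Quotient.mk J a) := by rw [← h1]
  right_inv y := mul_one y

/-- `Hom_A(I/(I²+I·L), A/(I+L)) ≃ (A/(I+L))^c`. -/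
noncomputable def homEquiv (b : Module.Basis (Fin c) (A ⧸ I) I.Cotangent) :
    ((↥I ⧸ Submodule.comap I.subtype (I ^ 2 + I * L)) →ₗ[A] A ⧸ (I + L)) ≃ₗ[A]
      (Fin c → A ⧸ (I + L)) :=
  (LinearEquiv.arrowCongr (qModEquiv I L b) (LinearEquiv.refl A _)).trans
    (((LinearMap.lsum A (fun _ : Fin c => A ⧸ (I + L)) A).symm).trans
      (LinearEquiv.piCongrRight fun _ => endEquiv (I + L)))

end Equivs

section RS
variable (k : Type*) [Field k] {A : Type*} [CommRing A] [Algebra k A]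

/-- The `k`-linear map on `RestrictScalars` induced by an `A`-linear map. -/
def rsMap {X Y : Type*} [AddCommGroup X] [AddCommGroup Y] [Module A X] [Module A Y]
    (f : X →ₗ[A] Y) : RestrictScalars k A X →ₗ[k] RestrictScalars k A Y where
  toFun x := f x
  map_add' := f.map_add
  map_smul' c x := f.map_smul (algebraMap k A c) x

/-- The `k`-linear equiv on `RestrictScalars` induced by an `A`-linear equiv. -/
def rsEquiv {X Y : Type*} [AddCommGroup X] [AddCommGroup Y] [Module A X] [Module A Y]
    (e : X ≃ₗ[A] Y) : RestrictScalars k A X ≃ₗ[k] RestrictScalars k A Y :=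
  { rsMap k e.toLinearMap with
    invFun := e.symm
    left_inv := e.left_inv
    right_inv := e.right_inv }

/-- If `X` is already a compatible `k`-module, `RestrictScalars k A X ≃ₗ[k] X`. -/
def rsSelf {X : Type*} [AddCommGroup X] [Module A X] [Module k X] [IsScalarTower k A X] :
    RestrictScalars k A X ≃ₗ[k] X where
  toFun x := x
  invFun x := x
  left_inv _ := rfl
  right_inv _ := rfl
  map_add' _ _ := rfl
  map_smul' c x := algebraMap_smul A c (show X from x)

end RS


set_option maxHeartbeats 1000000 in
/-- Let `k` be a field, `A` a Noetherian commutative `k`-algebra, `I, L`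
ideals of `A` with `J = I + L`. If `I/I²` is a free `A/I`-module of rank `c` and `A/J` is a
finite-dimensional `k`-vector space, then the restriction map
`Hom_A((I+L)/(I²+L), A/J) → Hom_A(I/(I²+I·L), A/J)` is injective, `Q(L,I)` is a
finite-dimensional `k`-vector space, and
`dim_k Q(L,I) = c · dim_k(A/J) − dim_k Hom_A((I+L)/(I²+L), A/J)`. -/
theorem fibers_stmt8 {k : Type*} [Field k] {A : Type*} [CommRing A] [IsNoetherianRing A]
    [Algebra k A] (I L : Ideal A) (c : ℕ)
    (hfree : Nonempty (Module.Basis (Fin c) (A ⧸ I) I.Cotangent))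
    (hfin : FiniteDimensional k (A ⧸ (I + L))) :
    Function.Injective (qRes A L I) ∧
    Module.Finite k (RestrictScalars k A (Qmod A L I)) ∧
    Module.finrank k (RestrictScalars k A (Qmod A L I)) =
      c * Module.finrank k (A ⧸ (I + L)) -
        Module.finrank k
          (RestrictScalars k A
            ((↥(I + L) ⧸ Submodule.comap (I + L).subtype (I ^ 2 + L)) →ₗ[A]
              A ⧸ (I + L))) := by
  classical
  obtain ⟨b⟩ := hfree
  -- surjectivity of the map ι
  have hsurjι : Function.Surjective (qIota A L I) := by
    intro x
    obtain ⟨z, rfl⟩ := Submodule.Quotient.mk_surjective _ x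
    obtain ⟨i, hi, l, hl, hz⟩ := Submodule.mem_sup.mp z.2
    refine ⟨Submodule.Quotient.mk ⟨i, hi⟩, ?_⟩
    rw [qIota, Submodule.liftQ_apply]
    show Submodule.Quotient.mk _ = Submodule.Quotient.mk z
    rw [Submodule.Quotient.eq, Submodule.mem_comap]
    have hmem : i - (z : A) ∈ I ^ 2 + L := by
      have h3 : i - (z : A) = -l := by rw [← hz]; ring
      rw [h3, Submodule.add_eq_sup]
      exact neg_mem (Submodule.mem_sup_right hl)
    simpa using hmem
  -- injectivity of the restriction map
  have hinj : Function.Injective (qRes A L I) := by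
    intro f g h
    apply LinearMap.ext
    intro y
    obtain ⟨x, rfl⟩ := hsurjι y
    exact LinearMap.congr_fun h x
  -- the k-linear equivalence for the Hom module
  let Ek := (rsEquiv k (homEquiv I L b)).trans (rsSelf k)
  letI : @Module k (RestrictScalars k A
      ((↥I ⧸ Submodule.comap I.subtype (I ^ 2 + I * L)) →ₗ[A] A ⧸ (I + L))) _
      AddCommGroup.toAddCommMonoid :=
    (RestrictScalars.module k A _ : Module k (RestrictScalars k A
      ((↥I ⧸ Submodule.comap I.subtype (I ^ 2 + I * L)) →ₗ[A] A ⧸ (I + L))))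
  haveI hfinH : FiniteDimensional k (RestrictScalars k A
      ((↥I ⧸ Submodule.comap I.subtype (I ^ 2 + I * L)) →ₗ[A] A ⧸ (I + L))) :=
    Ek.symm.finiteDimensional
  haveI : Module.Finite k (RestrictScalars k A
      ((↥I ⧸ Submodule.comap I.subtype (I ^ 2 + I * L)) →ₗ[A] A ⧸ (I + L))) :=
    Module.Finite.equiv Ek.symm
  have hdimH : Module.finrank k (RestrictScalars k A
      ((↥I ⧸ Submodule.comap I.subtype (I ^ 2 + I * L)) →ₗ[A] A ⧸ (I + L))) =
      c * Module.finrank k (A ⧸ (I + L)) := by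
    rw [Ek.finrank_eq, Module.finrank_pi_fintype, Finset.sum_const, Finset.card_univ,
      Fintype.card_fin, smul_eq_mul]
  -- the projection onto Qmod
  letI : @Module k (RestrictScalars k A (Qmod A L I)) _ AddCommGroup.toAddCommMonoid :=
    (RestrictScalars.module k A _ : Module k (RestrictScalars k A (Qmod A L I)))
  let p := rsMap k (Submodule.mkQ (LinearMap.range (qRes A L I)))
  have hpsurj : Function.Surjective p := by
    intro y
    obtain ⟨x, hx⟩ := Submodule.mkQ_surjective (LinearMap.range (qRes A L I)) y
    exact ⟨x, hx⟩
  haveI hfinQ : Module.Finite k (RestrictScalars k A (Qmod A L I)) :=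
    Module.Finite.of_surjective p hpsurj
  have hrn := LinearMap.finrank_range_add_finrank_ker p
  erw [LinearMap.range_eq_top.2 hpsurj, finrank_top] at hrn
  -- the kernel of p is isomorphic to the Hom module on (I+L)
  let m : RestrictScalars k A
      ((↥(I + L) ⧸ Submodule.comap (I + L).subtype (I ^ 2 + L)) →ₗ[A] A ⧸ (I + L)) →ₗ[k]
      ↥(LinearMap.ker p) :=
    LinearMap.codRestrict _ (rsMap k (qRes A L I)) (fun h' => by
      rw [LinearMap.mem_ker]
      show Submodule.mkQ (LinearMap.range (qRes A L I)) (qRes A L I h') = 0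
      rw [Submodule.mkQ_apply, Submodule.Quotient.mk_eq_zero]
      exact LinearMap.mem_range.mpr ⟨h', rfl⟩)
  have hminj : Function.Injective m := by
    intro a b hab
    have : qRes A L I a = qRes A L I b := congrArg Subtype.val hab
    exact hinj this
  have hmsurj : Function.Surjective m := by
    rintro ⟨x, hx⟩
    rw [LinearMap.mem_ker] at hx
    have hx' : x ∈ LinearMap.range (qRes A L I) := by
      have h0 : Submodule.mkQ (LinearMap.range (qRes A L I)) x = 0 := hx
      exact (Submodule.Quotient.mk_eq_zero (LinearMap.range (qRes A L I))).1 h0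
    obtain ⟨h', hh⟩ := hx'
    exact ⟨h', Subtype.ext hh⟩
  have hdimker : Module.finrank k ↥(LinearMap.ker p) = Module.finrank k
      (RestrictScalars k A
        ((↥(I + L) ⧸ Submodule.comap (I + L).subtype (I ^ 2 + L)) →ₗ[A] A ⧸ (I + L))) :=
    ((LinearEquiv.ofBijective m ⟨hminj, hmsurj⟩).finrank_eq).symm
  refine ⟨hinj, hfinQ, ?_⟩
  erw [hdimH, hdimker] at hrn
  exact Nat.eq_sub_of_add_eq hrn
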